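/- Consider the generalized trimmed lasso: minimize F(x₀, x₁, …, x_L) := f(x₀, …, x_L) + Σ_{l=1}^{L} γ_l T_{K_l, m_l, p_l}(D_l x_l − c_l), where f is real-valued and directionally differentiable, γ_l > 0, K_l ∈ {0, …, m_l − 1}, c_l ∈ ℝ^{m_l p_l}, and D_l ∈ ℝ^{m_l p_l × n_l} is nonzero. Let x* = (x₀*, x₁*, …, x_L*) be a d-stationary point, i.e., F′(x*; d) ≥ 0 for all d. Fix l ∈ [L] and assume: (A1) there exists x̄_l ∈ ℝ^{n_l} with D_l x̄_l = c_l; (A2) there exists Γ_l > 0 such that f′(x₀*, …, x_L*; (0, …, d_l, …, 0)) ≤ Γ_l for every d_l ∈ ℝ^{n_l} with ‖d_l‖₂ = 1 (the direction being d_l in block l and zero elsewhere). If γ_l > Γ_l / σ_{K_l, m_l, p_l}(D_l), then T_{K_l, m_l, p_l}(D_l x_l* − c_l) = 0. -/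

import Mathlib

open Filter Topology Matrix

/-- `f` has one-sided directional derivative `L` at `x` in direction `d`. -/
def HasDDerivAt {E : Type*} [AddCommMonoid E] [SMul ℝ E] (f : E → ℝ) (x d : E) (L : ℝ) :
    Prop :=
  Tendsto (fun ς : ℝ => (f (x + ς • d) - f x) / ς) (nhdsWithin 0 (Set.Ioi 0)) (nhds L)

/-- The trimmed (group) ℓ₁ norm `T_{K,m,p}`. -/
noncomputable def trimmedL1 {m p : ℕ} (K : ℕ) (z : Fin m × Fin p → ℝ) : ℝ :=
  sInf {s : ℝ | ∃ Λ : Finset (Fin m), Λ.card = m - K ∧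
    s = ∑ i ∈ Λ, Real.sqrt (∑ j, z (i, j) ^ 2)}

/-- The smallest nonzero singular value of a real matrix. -/
noncomputable def sigmaMin {α β : Type*} [Fintype α] [Fintype β] (A : Matrix α β ℝ) : ℝ :=
  sInf {σ : ℝ | 0 < σ ∧ ∃ v : β → ℝ, v ≠ 0 ∧ (Aᵀ * A).mulVec v = (σ ^ 2) • v}

/-- The row-block submatrix `(D)_Λ` of a block matrix `D` with `m` row blocks of height `p`. -/
def blockSub {m p n : ℕ} (D : Matrix (Fin m × Fin p) (Fin n) ℝ) (Λ : Finset (Fin m)) :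
    Matrix ({i // i ∈ Λ} × Fin p) (Fin n) ℝ :=
  D.submatrix (fun q => ((q.1 : Fin m), q.2)) id

open scoped Classical in
/-- The constant `σ_{K,m,p}(D)`: `σ_min(D)` if `D` is surjective, and otherwise the minimum
of `σ_min((D)_Λ)` over `Λ ⊆ [m]` with `|Λ| = m − K` and `(D)_Λ ≠ 0`. -/
noncomputable def sigmaK {m p n : ℕ} (K : ℕ) (D : Matrix (Fin m × Fin p) (Fin n) ℝ) : ℝ :=
  if Function.Surjective D.mulVec then sigmaMin D
  else sInf {s : ℝ | ∃ Λ : Finset (Fin m), Λ.card = m - K ∧ blockSub D Λ ≠ 0 ∧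
    s = sigmaMin (blockSub D Λ)}

/-! ### Auxiliary lemmas -/

noncomputable def en {ι : Type*} [Fintype ι] (v : ι → ℝ) : ℝ := Real.sqrt (∑ i, v i ^ 2)

lemma en_nonneg {ι : Type*} [Fintype ι] (v : ι → ℝ) : 0 ≤ en v := Real.sqrt_nonneg _

lemma en_sq {ι : Type*} [Fintype ι] (v : ι → ℝ) : en v ^ 2 = ∑ i, v i ^ 2 :=
  Real.sq_sqrt (Finset.sum_nonneg fun _ _ => sq_nonneg _)

lemma en_eq_zero {ι : Type*} [Fintype ι] {v : ι → ℝ} (h : en v = 0) : v = 0 := by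
  have h2 : ∑ i, v i ^ 2 = 0 := by
    have := congrArg (· ^ 2) h
    simpa [en_sq] using this
  funext i
  have := (Finset.sum_eq_zero_iff_of_nonneg (fun i _ => sq_nonneg (v i))).1 h2 i (Finset.mem_univ i)
  exact pow_eq_zero_iff (n := 2) (by norm_num) |>.1 this

lemma en_pos {ι : Type*} [Fintype ι] {v : ι → ℝ} (h : v ≠ 0) : 0 < en v :=
  lt_of_le_of_ne (en_nonneg v) fun h0 => h (en_eq_zero h0.symm)

lemma en_smul {ι : Type*} [Fintype ι] (t : ℝ) (ht : 0 ≤ t) (v : ι → ℝ) :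
    en (fun i => t * v i) = t * en v := by
  unfold en
  rw [show ∑ i, (t * v i) ^ 2 = t ^ 2 * ∑ i, v i ^ 2 by rw [Finset.mul_sum]; ring_nf,
    Real.sqrt_mul (sq_nonneg t), Real.sqrt_sq ht]

lemma sqrt_add_le (x y : ℝ) (hx : 0 ≤ x) (hy : 0 ≤ y) :
    Real.sqrt (x + y) ≤ Real.sqrt x + Real.sqrt y := by
  have h1 := Real.sq_sqrt hx
  have h2 := Real.sq_sqrt hy
  have h3 := Real.sqrt_nonneg x
  have h4 := Real.sqrt_nonneg y
  have h5 : x + y ≤ (Real.sqrt x + Real.sqrt y) ^ 2 := by nlinarith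
  calc Real.sqrt (x + y) ≤ Real.sqrt ((Real.sqrt x + Real.sqrt y) ^ 2) := Real.sqrt_le_sqrt h5
    _ = Real.sqrt x + Real.sqrt y := Real.sqrt_sq (by linarith)

lemma sqrt_sum_le {ι : Type*} (s : Finset ι) (a : ι → ℝ) (ha : ∀ i ∈ s, 0 ≤ a i) :
    Real.sqrt (∑ i ∈ s, a i) ≤ ∑ i ∈ s, Real.sqrt (a i) := by
  induction s using Finset.cons_induction with
  | empty => simp
  | cons i s his ih =>
    rw [Finset.sum_cons, Finset.sum_cons]
    calc Real.sqrt (a i + ∑ j ∈ s, a j)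
        ≤ Real.sqrt (a i) + Real.sqrt (∑ j ∈ s, a j) :=
          sqrt_add_le _ _ (ha i (Finset.mem_cons_self _ _))
            (Finset.sum_nonneg fun j hj => ha j (Finset.mem_cons_of_mem hj))
      _ ≤ _ := by
          have := ih fun j hj => ha j (Finset.mem_cons_of_mem hj)
          linarith

lemma inf'_affine {ι : Type*} (s : Finset ι) (hs : s.Nonempty) (f : ι → ℝ) (c ς : ℝ)
    (hς : 0 < ς) : (s.inf' hs f - c) / ς = s.inf' hs fun a => (f a - c) / ς := by
  induction hs using Finset.Nonempty.cons_induction with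
  | singleton a => simp
  | cons a s ha hs ih =>
    rw [Finset.inf'_cons, Finset.inf'_cons, ← ih,
      ← min_sub_sub_right, ← min_div_div_right hς.le]
    all_goals exact hs

lemma HasDDerivAt.smul_dir {E : Type*} [AddCommMonoid E] [Module ℝ E] {f : E → ℝ} {x d : E}
    {Lv t : ℝ} (ht : 0 < t) (h : HasDDerivAt f x d Lv) : HasDDerivAt f x (t • d) (t * Lv) := by
  unfold HasDDerivAt at h ⊢
  have hmap : Tendsto (fun ς : ℝ => t * ς) (nhdsWithin 0 (Set.Ioi 0))
      (nhdsWithin 0 (Set.Ioi 0)) := by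
    rw [tendsto_nhdsWithin_iff]
    constructor
    · have : Tendsto (fun ς : ℝ => t * ς) (nhds 0) (nhds (t * 0)) :=
        (continuous_const.mul continuous_id).tendsto 0
      simpa using this.mono_left nhdsWithin_le_nhds
    · filter_upwards [self_mem_nhdsWithin] with ς (hς : ς ∈ Set.Ioi 0)
      exact mul_pos ht hς
  have h2 := (h.comp hmap).const_mul t
  refine h2.congr' ?_
  filter_upwards [self_mem_nhdsWithin] with ς (hς : ς ∈ Set.Ioi 0)
  have hς0 : (ς : ℝ) ≠ 0 := ne_of_gt hς
  have ht0 : t ≠ 0 := ne_of_gt ht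
  simp only [Function.comp]
  rw [smul_smul]
  field_simp

lemma en_quot_tendsto {ι : Type*} [Fintype ι] (r u : ι → ℝ) :
    ∃ Lq : ℝ, Tendsto (fun ς => (en (fun j => r j + ς * u j) - en r) / ς)
      (nhdsWithin 0 (Set.Ioi 0)) (nhds Lq) ∧ ((∀ j, u j = - r j) → Lq = - en r) := by
  by_cases hr : r = 0
  · refine ⟨en u, ?_, ?_⟩
    · apply Tendsto.congr' _ tendsto_const_nhds
      filter_upwards [self_mem_nhdsWithin] with ς (hς : ς ∈ Set.Ioi 0)
      have hςpos : (0:ℝ) < ς := hς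
      have h1 : en (fun j => r j + ς * u j) = ς * en u := by
        rw [hr]; simpa using en_smul ς (le_of_lt hςpos) u
      have h2 : en r = 0 := by rw [hr]; simp [en]
      rw [h1, h2, sub_zero]
      field_simp
    · intro hu
      have : u = 0 := by funext j; rw [hu j, hr]; simp
      rw [this, hr]; simp [en]
  · have henr : 0 < en r := en_pos hr
    set q : ℝ → ℝ := fun ς => ∑ j, (r j + ς * u j) ^ 2 with hq
    have hq0 : q 0 = en r ^ 2 := by simp [hq, en_sq]
    have hq0' : q 0 ≠ 0 := by rw [hq0]; positivity
    have hdq : HasDerivAt q (∑ j, 2 * r j * u j) 0 := by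
      apply HasDerivAt.fun_sum
      intro j _
      have h1 : HasDerivAt (fun ς : ℝ => r j + ς * u j) (u j) 0 := by
        simpa using ((hasDerivAt_id (0:ℝ)).mul_const (u j)).const_add (r j)
      have := h1.fun_pow 2
      simpa using this
    have hsq : HasDerivAt (fun ς => Real.sqrt (q ς))
        (1 / (2 * Real.sqrt (q 0)) * (∑ j, 2 * r j * u j)) 0 :=
      (Real.hasDerivAt_sqrt hq0').comp 0 hdq
    set Lq := 1 / (2 * Real.sqrt (q 0)) * (∑ j, 2 * r j * u j) with hLq
    refine ⟨Lq, ?_, ?_⟩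
    · have := hasDerivAt_iff_tendsto_slope.1 hsq
      have h2 := this.mono_left
        (nhdsWithin_mono 0 (fun x hx => ne_of_gt hx : Set.Ioi (0:ℝ) ⊆ {0}ᶜ))
      apply h2.congr'
      filter_upwards [self_mem_nhdsWithin] with ς (hς : ς ∈ Set.Ioi 0)
      have : slope (fun ς => Real.sqrt (q ς)) 0 ς =
          (Real.sqrt (q ς) - Real.sqrt (q 0)) / ς := by
        rw [slope_def_field, sub_zero]
      have e1 : Real.sqrt (q ς) = en (fun j => r j + ς * u j) := by simp [en, hq]
      have e2 : Real.sqrt (q 0) = en r := by rw [hq0, Real.sqrt_sq henr.le]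
      rw [this, e1, e2]
    · intro hu
      have hsum : (∑ j, 2 * r j * u j) = - 2 * (en r ^ 2) := by
        rw [en_sq, Finset.mul_sum]
        apply Finset.sum_congr rfl
        intro j _
        rw [hu j]; ring
      rw [hLq, hsum, hq0, Real.sqrt_sq henr.le]
      field_simp

lemma tendsto_inf'_quot {ι : Type*} [DecidableEq ι] (s : Finset ι) (hs : s.Nonempty)
    (g : ι → ℝ → ℝ) (Lg : ι → ℝ)
    (hg : ∀ a ∈ s, Tendsto (fun ς => (g a ς - g a 0) / ς) (nhdsWithin 0 (Set.Ioi 0))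
      (nhds (Lg a))) :
    ∃ Lφ : ℝ, Tendsto (fun ς => (s.inf' hs (fun a => g a ς) - s.inf' hs (fun a => g a 0)) / ς)
        (nhdsWithin 0 (Set.Ioi 0)) (nhds Lφ) ∧
      ∀ a ∈ s, g a 0 = s.inf' hs (fun b => g b 0) → Lφ ≤ Lg a := by
  classical
  set φ0 := s.inf' hs (fun b => g b 0) with hφ0
  set A := s.filter (fun a => g a 0 = φ0) with hA
  have hAne : A.Nonempty := by
    obtain ⟨a, ha, hav⟩ := s.exists_mem_eq_inf' hs (fun b => g b 0)
    exact ⟨a, Finset.mem_filter.2 ⟨ha, hav.symm⟩⟩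
  have hAs : A ⊆ s := Finset.filter_subset _ _
  have hcont : ∀ a ∈ s, Tendsto (fun ς => g a ς) (nhdsWithin 0 (Set.Ioi 0)) (nhds (g a 0)) := by
    intro a ha
    have h1 : Tendsto (fun ς : ℝ => g a 0 + ς * ((g a ς - g a 0) / ς))
        (nhdsWithin 0 (Set.Ioi 0)) (nhds (g a 0 + 0 * Lg a)) := by
      refine Tendsto.const_add _ (Tendsto.mul ?_ (hg a ha))
      exact tendsto_id.mono_left nhdsWithin_le_nhds
    rw [zero_mul, add_zero] at h1
    apply h1.congr'
    filter_upwards [self_mem_nhdsWithin] with ς (hς : ς ∈ Set.Ioi 0)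
    have : (ς:ℝ) ≠ 0 := ne_of_gt hς
    field_simp
    ring
  have hMA : Tendsto (fun ς => A.inf' hAne (fun a => g a ς)) (nhdsWithin 0 (Set.Ioi 0))
      (nhds φ0) := by
    have := Tendsto.finset_inf'_nhds_apply hAne (fun a ha => hcont a (hAs ha))
    have heq : A.inf' hAne (fun a => g a 0) = φ0 := by
      obtain ⟨a, ha, hav⟩ := A.exists_mem_eq_inf' hAne (fun b => g b 0)
      rw [hav]
      exact (Finset.mem_filter.1 ha).2
    rwa [heq] at this
  have hev : ∀ᶠ ς in nhdsWithin (0:ℝ) (Set.Ioi 0),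
      s.inf' hs (fun a => g a ς) = A.inf' hAne (fun a => g a ς) := by
    have hlt : ∀ᶠ ς in nhdsWithin (0:ℝ) (Set.Ioi 0), ∀ a ∈ s \ A,
        A.inf' hAne (fun b => g b ς) < g a ς := by
      rw [eventually_all_finset]
      intro a ha
      obtain ⟨has, hna⟩ := Finset.mem_sdiff.1 ha
      have hgt : φ0 < g a 0 := by
        rcases lt_or_eq_of_le (Finset.inf'_le (fun b => g b 0) has) with h | h
        · exact h
        · exact absurd (Finset.mem_filter.2 ⟨has, h.symm⟩) hna
      exact hMA.eventually_lt (hcont a has) hgt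
    filter_upwards [hlt] with ς hς
    apply le_antisymm
    · obtain ⟨a, ha, hav⟩ := A.exists_mem_eq_inf' hAne (fun b => g b ς)
      rw [hav]
      exact Finset.inf'_le _ (hAs ha)
    · apply Finset.le_inf'
      intro b hb
      by_cases hbA : b ∈ A
      · exact Finset.inf'_le _ hbA
      · exact le_of_lt (hς b (Finset.mem_sdiff.2 ⟨hb, hbA⟩))
  refine ⟨A.inf' hAne Lg, ?_, ?_⟩
  · have hquot : Tendsto (fun ς => A.inf' hAne (fun a => (g a ς - g a 0) / ς))
        (nhdsWithin 0 (Set.Ioi 0)) (nhds (A.inf' hAne Lg)) :=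
      Tendsto.finset_inf'_nhds_apply hAne (fun a ha => hg a (hAs ha))
    apply hquot.congr'
    filter_upwards [hev, self_mem_nhdsWithin] with ς heq (hς : ς ∈ Set.Ioi 0)
    have hςpos : (0:ℝ) < ς := hς
    rw [heq, inf'_affine A hAne (fun a => g a ς) φ0 ς hςpos]
    refine Finset.inf'_congr hAne rfl fun a ha => ?_
    rw [← (Finset.mem_filter.1 ha).2]
  · intro a ha hav
    exact Finset.inf'_le _ (Finset.mem_filter.2 ⟨ha, hav⟩)

lemma dot_self_eq {γ : Type*} [Fintype γ] (u : γ → ℝ) : u ⬝ᵥ u = ∑ i, u i ^ 2 := by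
  simp [dotProduct, sq]

lemma dot_self_zero {γ : Type*} [Fintype γ] {u : γ → ℝ} (h : u ⬝ᵥ u = 0) : u = 0 := by
  rw [dot_self_eq] at h
  funext i
  have := (Finset.sum_eq_zero_iff_of_nonneg (fun i _ => sq_nonneg (u i))).1 h i (Finset.mem_univ i)
  exact pow_eq_zero_iff (n := 2) (by norm_num) |>.1 this

lemma sum_dot {γ ι : Type*} [Fintype γ] (s : Finset ι) (f : ι → γ → ℝ) (w : γ → ℝ) :
    (∑ i ∈ s, f i) ⬝ᵥ w = ∑ i ∈ s, f i ⬝ᵥ w := by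
  simp only [dotProduct, Finset.sum_apply, Finset.sum_mul]
  rw [Finset.sum_comm]

lemma dot_sum {γ ι : Type*} [Fintype γ] (s : Finset ι) (w : γ → ℝ) (f : ι → γ → ℝ) :
    w ⬝ᵥ (∑ i ∈ s, f i) = ∑ i ∈ s, w ⬝ᵥ f i := by
  simp only [dotProduct, Finset.sum_apply, Finset.mul_sum]
  rw [Finset.sum_comm]
lemma sigmaMin_key {α β : Type*} [Fintype α] [Fintype β] [DecidableEq β]
    (A : Matrix α β ℝ) (hA : A ≠ 0) (x : β → ℝ) :
    0 < sigmaMin A ∧ ∃ d : β → ℝ, A.mulVec d = A.mulVec x ∧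
      sigmaMin A * en d ≤ en (A.mulVec x) := by
  classical
  have hM : (Aᵀ * A).IsHermitian := by simpa using isHermitian_conjTranspose_mul_self A
  set B := hM.eigenvectorBasis with hB
  set μ := hM.eigenvalues with hμdef
  have hdot : ∀ u : β → ℝ, (A *ᵥ u) ⬝ᵥ (A *ᵥ u) = u ⬝ᵥ ((Aᵀ * A) *ᵥ u) := fun u => by
    rw [← Matrix.mulVec_mulVec, Matrix.dotProduct_mulVec u Aᵀ, Matrix.vecMul_transpose]
  have horth : ∀ i i' : β, (⇑(B i) : β → ℝ) ⬝ᵥ ⇑(B i') = if i = i' then 1 else 0 := by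
    intro i i'
    have h := B.orthonormal
    rw [orthonormal_iff_ite] at h
    have := h i i'
    rw [dotProduct_comm]
    simpa [EuclideanSpace.inner_eq_star_dotProduct] using this
  have heig : ∀ i, (Aᵀ * A) *ᵥ ⇑(B i) = μ i • ⇑(B i) := fun i => hM.mulVec_eigenvectorBasis i
  have hBdd : ∀ i, (⇑(B i) : β → ℝ) ⬝ᵥ ⇑(B i) = 1 := by intro i; rw [horth i i]; simp
  have hμeq : ∀ i, (A *ᵥ ⇑(B i)) ⬝ᵥ (A *ᵥ ⇑(B i)) = μ i := by
    intro i
    rw [hdot, heig, dotProduct_smul, hBdd i]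
    simp
  have hμnn : ∀ i, 0 ≤ μ i := by
    intro i
    rw [← hμeq i, dot_self_eq]
    positivity
  have hker : ∀ i, μ i = 0 → A *ᵥ ⇑(B i) = 0 := by
    intro i hi
    apply dot_self_zero
    rw [hμeq i, hi]
  have hexp : ∀ u : β → ℝ, u = ∑ i, B.repr (WithLp.toLp 2 u) i • (⇑(B i) : β → ℝ) := by
    intro u
    have h := B.sum_repr (WithLp.toLp 2 u)
    funext j
    have h2 := congrArg (fun (w : EuclideanSpace ℝ β) => w j) h
    simp only [] at h2
    rw [Finset.sum_apply]
    simpa using h2.symm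
  have hmulsum : ∀ (s : Finset β) (e : β → ℝ),
      A *ᵥ (∑ i ∈ s, e i • (⇑(B i) : β → ℝ)) = ∑ i ∈ s, e i • (A *ᵥ ⇑(B i)) := by
    intro s e
    rw [← Matrix.mulVecLin_apply, map_sum]
    simp [Matrix.mulVecLin_apply]
  have hpair : ∀ (s : Finset β) (e f : β → ℝ),
      (∑ i ∈ s, e i • (⇑(B i) : β → ℝ)) ⬝ᵥ (∑ i ∈ s, f i • (⇑(B i) : β → ℝ)) =
        ∑ i ∈ s, e i * f i := by
    intro s e f
    rw [sum_dot]
    apply Finset.sum_congr rfl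
    intro i hi
    rw [smul_dotProduct, dot_sum]
    simp only [dotProduct_smul, horth, smul_eq_mul, mul_ite, mul_one, mul_zero]
    rw [Finset.sum_ite_eq s i f, if_pos hi]
  set T : Finset β := Finset.univ.filter (fun i => μ i ≠ 0) with hT
  have hTne : T.Nonempty := by
    by_contra hTe
    have hall : ∀ i, μ i = 0 := by
      intro i
      by_contra hi
      exact hTe ⟨i, Finset.mem_filter.2 ⟨Finset.mem_univ _, hi⟩⟩
    have hzero : ∀ u : β → ℝ, A *ᵥ u = 0 := by
      intro u
      conv_lhs => rw [hexp u]
      rw [hmulsum]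
      apply Finset.sum_eq_zero
      intro i _
      rw [hker i (hall i), smul_zero]
    apply hA
    ext i j
    have := congrFun (hzero (Pi.single j 1)) i
    simpa [Matrix.mulVec_single] using this
  set S := {σ : ℝ | 0 < σ ∧ ∃ v : β → ℝ, v ≠ 0 ∧ (Aᵀ * A).mulVec v = (σ ^ 2) • v} with hS
  have hSig : sigmaMin A = sInf S := rfl
  have hmemS : ∀ i ∈ T, Real.sqrt (μ i) ∈ S := by
    intro i hi
    have hμi : 0 < μ i := lt_of_le_of_ne (hμnn i) (Ne.symm (Finset.mem_filter.1 hi).2)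
    refine ⟨Real.sqrt_pos.2 hμi, ⇑(B i), ?_, ?_⟩
    · intro h0
      have h1 := hBdd i
      rw [h0] at h1
      simp at h1
    · rw [Real.sq_sqrt hμi.le]
      exact heig i
  obtain ⟨i1, hi1⟩ := id hTne
  have hSne : S.Nonempty := ⟨_, hmemS i1 hi1⟩
  have hSnn : ∀ σ ∈ S, (0:ℝ) ≤ σ := fun σ hσ => hσ.1.le
  have hSbdd : BddBelow S := ⟨0, hSnn⟩
  have hdotc : ∀ (v : β → ℝ) (i : β), (⇑(B i) : β → ℝ) ⬝ᵥ v = B.repr (WithLp.toLp 2 v) i := by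
    intro v i
    conv_lhs => rw [hexp v]
    rw [dot_sum]
    simp only [dotProduct_smul, horth, smul_eq_mul, mul_ite, mul_one, mul_zero]
    rw [Finset.sum_ite_eq Finset.univ i (fun i' => B.repr (WithLp.toLp 2 v) i'), if_pos (Finset.mem_univ i)]
  have hMT : (Aᵀ * A)ᵀ = Aᵀ * A := by
    rw [Matrix.transpose_mul, Matrix.transpose_transpose]
  have hlow : ∀ σ ∈ S, ∃ i ∈ T, σ = Real.sqrt (μ i) := by
    rintro σ ⟨hσ, v, hv, hveq⟩
    have hcoef : ∀ i, μ i * B.repr (WithLp.toLp 2 v) i = σ ^ 2 * B.repr (WithLp.toLp 2 v) i := by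
      intro i
      have h1 : (⇑(B i) : β → ℝ) ⬝ᵥ ((Aᵀ * A) *ᵥ v) = μ i * B.repr (WithLp.toLp 2 v) i := by
        rw [Matrix.dotProduct_mulVec, ← hMT, Matrix.vecMul_transpose, heig,
          smul_dotProduct, hdotc v i]
        simp
      have h2 : (⇑(B i) : β → ℝ) ⬝ᵥ ((σ ^ 2) • v) = σ ^ 2 * B.repr (WithLp.toLp 2 v) i := by
        rw [dotProduct_smul, hdotc v i]
        simp
      rw [← h1, ← h2, hveq]
    have hex : ∃ i, B.repr (WithLp.toLp 2 v) i ≠ 0 := by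
      by_contra hc
      push_neg at hc
      apply hv
      rw [hexp v]
      apply Finset.sum_eq_zero
      intro i _
      rw [hc i, zero_smul]
    obtain ⟨i0, hi0⟩ := hex
    have hμσ : μ i0 = σ ^ 2 := by
      have := hcoef i0
      exact mul_right_cancel₀ hi0 this
    refine ⟨i0, Finset.mem_filter.2 ⟨Finset.mem_univ _, ?_⟩, ?_⟩
    · rw [hμσ]
      positivity
    · rw [hμσ, Real.sqrt_sq hσ.le]
  have hbpos : 0 < T.inf' hTne (fun i => Real.sqrt (μ i)) := by
    rw [Finset.lt_inf'_iff]
    intro i hi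
    exact Real.sqrt_pos.2 (lt_of_le_of_ne (hμnn i) (Ne.symm (Finset.mem_filter.1 hi).2))
  have hσpos : 0 < sigmaMin A := by
    rw [hSig]
    apply lt_of_lt_of_le hbpos
    apply le_csInf hSne
    intro σ hσ
    obtain ⟨i, hi, hieq⟩ := hlow σ hσ
    rw [hieq]
    exact Finset.inf'_le _ hi
  have hub : ∀ i ∈ T, sigmaMin A ≤ Real.sqrt (μ i) := fun i hi => csInf_le hSbdd (hmemS i hi)
  have hσsq : ∀ i ∈ T, sigmaMin A ^ 2 ≤ μ i := by
    intro i hi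
    have h1 := hub i hi
    have h2 := Real.sq_sqrt (hμnn i)
    nlinarith [hσpos]
  -- construction of d
  set cx : β → ℝ := fun i => B.repr (WithLp.toLp 2 x) i with hcx
  set d : β → ℝ := ∑ i ∈ T, cx i • (⇑(B i) : β → ℝ) with hd
  have hAd : A *ᵥ d = A *ᵥ x := by
    rw [hd, hmulsum]
    conv_rhs => rw [hexp x, hmulsum]
    apply Finset.sum_subset (Finset.subset_univ T)
    intro i _ hiT
    have : μ i = 0 := by
      by_contra hi
      exact hiT (Finset.mem_filter.2 ⟨Finset.mem_univ _, hi⟩)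
    rw [hker i this, smul_zero]
  refine ⟨hσpos, d, hAd, ?_⟩
  have hdd : d ⬝ᵥ d = ∑ i ∈ T, cx i ^ 2 := by
    rw [hd, hpair]
    apply Finset.sum_congr rfl
    intro i _
    ring
  have hMd : (Aᵀ * A) *ᵥ d = ∑ i ∈ T, (μ i * cx i) • (⇑(B i) : β → ℝ) := by
    rw [hd, ← Matrix.mulVecLin_apply, map_sum]
    apply Finset.sum_congr rfl
    intro i _
    rw [_root_.map_smul, Matrix.mulVecLin_apply, heig, smul_smul, mul_comm (cx i) (μ i)]
  have hAdsq : (A *ᵥ d) ⬝ᵥ (A *ᵥ d) = ∑ i ∈ T, μ i * cx i ^ 2 := by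
    rw [hdot, hMd, dot_sum]
    refine Finset.sum_congr rfl fun i hi => ?_
    rw [dotProduct_smul, hd, sum_dot]
    simp only [smul_dotProduct, horth, smul_eq_mul, mul_ite, mul_one, mul_zero]
    rw [Finset.sum_ite_eq' T i (fun i' => cx i'), if_pos hi]
    ring
  -- final inequality
  have hsq : (sigmaMin A * en d) ^ 2 ≤ en (A *ᵥ x) ^ 2 := by
    rw [mul_pow, en_sq, en_sq, ← dot_self_eq d, ← dot_self_eq (A *ᵥ x), ← hAd, hAdsq, hdd,
      Finset.mul_sum]
    apply Finset.sum_le_sum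
    intro i hi
    have h1 := hσsq i hi
    nlinarith [sq_nonneg (cx i)]
  have h1 : 0 ≤ sigmaMin A * en d := mul_nonneg hσpos.le (en_nonneg d)
  have h2 : 0 ≤ en (A *ᵥ x) := en_nonneg _
  calc sigmaMin A * en d = Real.sqrt ((sigmaMin A * en d) ^ 2) := (Real.sqrt_sq h1).symm
    _ ≤ Real.sqrt (en (A *ᵥ x) ^ 2) := Real.sqrt_le_sqrt hsq
    _ = en (A *ᵥ x) := Real.sqrt_sq h2

lemma filterCard_nonempty {m K : ℕ} :
    (Finset.univ.filter (fun Λ : Finset (Fin m) => Λ.card = m - K)).Nonempty := by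
  obtain ⟨t, _, htc⟩ := Finset.exists_subset_card_eq (s := (Finset.univ : Finset (Fin m))) (n := m - K)
    (by simp only [Finset.card_univ, Fintype.card_fin]; omega)
  exact ⟨t, Finset.mem_filter.2 ⟨Finset.mem_univ _, htc⟩⟩

lemma trimmedL1_eq {m p : ℕ} (K : ℕ)
    (hS : (Finset.univ.filter (fun Λ : Finset (Fin m) => Λ.card = m - K)).Nonempty)
    (z : Fin m × Fin p → ℝ) :
    trimmedL1 K z = (Finset.univ.filter (fun Λ : Finset (Fin m) => Λ.card = m - K)).inf' hS
      (fun Λ => ∑ i ∈ Λ, en (fun j => z (i, j))) := by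
  rw [Finset.inf'_eq_csInf_image]
  unfold trimmedL1
  congr 1
  ext s
  simp only [Set.mem_setOf_eq, Set.mem_image, Finset.mem_coe, Finset.mem_filter,
    Finset.mem_univ, true_and, en]
  constructor
  · rintro ⟨Λ, hc, rfl⟩
    exact ⟨Λ, hc, rfl⟩
  · rintro ⟨Λ, hc, rfl⟩
    exact ⟨Λ, hc, rfl⟩

/-- Exact penalty at d-stationary points of the generalized trimmed lasso
(Lemma on exact penalty parameters). -/
theorem stmt6 {n0 L : ℕ} {n m p K : Fin L → ℕ}
    (hK : ∀ l, K l < m l)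
    (γ : Fin L → ℝ) (hγ : ∀ l, 0 < γ l)
    (D : ∀ l, Matrix (Fin (m l) × Fin (p l)) (Fin (n l)) ℝ) (hD : ∀ l, D l ≠ 0)
    (c : ∀ l, Fin (m l) × Fin (p l) → ℝ)
    (f : ((Fin n0 → ℝ) × (∀ l, Fin (n l) → ℝ)) → ℝ)
    -- f is directionally differentiable with directional derivative df
    (df : ((Fin n0 → ℝ) × (∀ l, Fin (n l) → ℝ)) →
      ((Fin n0 → ℝ) × (∀ l, Fin (n l) → ℝ)) → ℝ)
    (hdf : ∀ x d, HasDDerivAt f x d (df x d))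
    (F : ((Fin n0 → ℝ) × (∀ l, Fin (n l) → ℝ)) → ℝ)
    (hF : ∀ x, F x =
      f x + ∑ l, γ l * trimmedL1 (K l) (fun ip => (D l).mulVec (x.2 l) ip - c l ip))
    (xstar : (Fin n0 → ℝ) × (∀ l, Fin (n l) → ℝ))
    -- x* is a d-stationary point of F
    (hstat : ∀ d, ∀ Ld : ℝ, HasDDerivAt F xstar d Ld → 0 ≤ Ld)
    (l : Fin L)
    -- (A1): the affine system D_l x = c_l is solvable
    (xbar : Fin (n l) → ℝ) (hA1 : (D l).mulVec xbar = c l)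
    -- (A2): bound on f′(x*; ·) along unit directions in block l
    (Γ : ℝ) (hΓ : 0 < Γ)
    (hA2 : ∀ dl : Fin (n l) → ℝ, Real.sqrt (∑ j, dl j ^ 2) = 1 →
      df xstar ((0 : Fin n0 → ℝ), Function.update (0 : ∀ l', Fin (n l') → ℝ) l dl) ≤ Γ)
    (hγl : γ l > Γ / sigmaK (K l) (D l)) :
    trimmedL1 (K l) (fun ip => (D l).mulVec (xstar.2 l) ip - c l ip) = 0 := by
  set r : Fin (m l) × Fin (p l) → ℝ := fun ip => (D l).mulVec (xstar.2 l) ip - c l ip with hr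
  set 𝒮 := Finset.univ.filter (fun Λ : Finset (Fin (m l)) => Λ.card = m l - K l) with h𝒮
  have hSne : 𝒮.Nonempty := filterCard_nonempty
  obtain ⟨Λs, hΛs, hΛsval⟩ := 𝒮.exists_mem_eq_inf' hSne (fun Λ => ∑ i ∈ Λ, en (fun j => r (i, j)))
  set T0 := trimmedL1 (K l) r with hT0def
  have hT0eq : T0 = ∑ i ∈ Λs, en (fun j => r (i, j)) := by
    rw [hT0def, trimmedL1_eq (K l) hSne r, hΛsval]
  have hT0nn : 0 ≤ T0 := by
    rw [hT0eq]
    exact Finset.sum_nonneg fun _ _ => en_nonneg _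
  -- Step: construct a good direction dl
  have hkey : T0 = 0 ∨ ∃ dl : Fin (n l) → ℝ,
      (∀ i ∈ Λs, ∀ j, (D l).mulVec dl (i, j) = - r (i, j)) ∧
      0 < sigmaK (K l) (D l) ∧ sigmaK (K l) (D l) * en dl ≤ T0 := by
    by_cases hsurj : Function.Surjective (D l).mulVec
    · right
      have hσK : sigmaK (K l) (D l) = sigmaMin (D l) := by
        simp only [sigmaK, if_pos hsurj]
      set w : Fin (m l) × Fin (p l) → ℝ := fun ip => if ip.1 ∈ Λs then - r ip else 0 with hw
      obtain ⟨x0, hx0⟩ := hsurj w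
      obtain ⟨hσpos, d, hd1, hd2⟩ := sigmaMin_key (D l) (hD l) x0
      rw [hx0] at hd1 hd2
      refine ⟨d, ?_, by rw [hσK]; exact hσpos, ?_⟩
      · intro i hi j
        rw [hd1]
        simp [hw, hi]
      · rw [hσK]
        refine le_trans hd2 ?_
        rw [hT0eq]
        have h1 : ∑ q : Fin (m l) × Fin (p l), w q ^ 2 = ∑ i ∈ Λs, ∑ j, r (i, j) ^ 2 := by
          rw [Fintype.sum_prod_type]
          have hone : ∀ i : Fin (m l), (∑ j, w (i, j) ^ 2) =
              if i ∈ Λs then ∑ j, r (i, j) ^ 2 else 0 := by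
            intro i
            by_cases hi : i ∈ Λs <;> simp [hw, hi]
          rw [Finset.sum_congr rfl (fun i _ => hone i), Finset.sum_ite_mem, Finset.univ_inter]
        calc en w = Real.sqrt (∑ i ∈ Λs, ∑ j, r (i, j) ^ 2) := by rw [en, h1]
          _ ≤ ∑ i ∈ Λs, Real.sqrt (∑ j, r (i, j) ^ 2) :=
            sqrt_sum_le _ _ (fun i _ => by positivity)
          _ = ∑ i ∈ Λs, en (fun j => r (i, j)) := rfl
    · have hσK : sigmaK (K l) (D l) = sInf {s : ℝ | ∃ Λ : Finset (Fin (m l)),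
          Λ.card = m l - K l ∧ blockSub (D l) Λ ≠ 0 ∧ s = sigmaMin (blockSub (D l) Λ)} := by
        simp only [sigmaK, if_neg hsurj]
      by_cases hbz : blockSub (D l) Λs = 0
      · left
        rw [hT0eq]
        apply Finset.sum_eq_zero
        intro i hi
        have hrow : ∀ (j : Fin (p l)) (k : Fin (n l)), D l (i, j) k = 0 := by
          intro j k
          have := congrFun (congrFun hbz (⟨i, hi⟩, j)) k
          exact this
        have hmv : ∀ (v : Fin (n l) → ℝ) (j : Fin (p l)), (D l).mulVec v (i, j) = 0 := by
          intro v j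
          simp [Matrix.mulVec, dotProduct, hrow]
        have hz : ∀ j, r (i, j) = 0 := by
          intro j
          rw [hr]
          show (D l).mulVec (xstar.2 l) (i, j) - c l (i, j) = 0
          rw [hmv, ← hA1, hmv]
          ring
        simp [en, hz]
      · right
        obtain ⟨hσpos, d, hd1, hd2⟩ := sigmaMin_key (blockSub (D l) Λs) hbz (xbar - xstar.2 l)
        have hbm : ∀ (v : Fin (n l) → ℝ) (q : {i // i ∈ Λs} × Fin (p l)),
            (blockSub (D l) Λs).mulVec v q = (D l).mulVec v (q.1.1, q.2) := fun v q => rfl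
        have hAx : (blockSub (D l) Λs).mulVec (xbar - xstar.2 l) =
            fun q : {i // i ∈ Λs} × Fin (p l) => - r (q.1.1, q.2) := by
          funext q
          rw [hbm, Matrix.mulVec_sub]
          show (D l).mulVec xbar (q.1.1, q.2) - (D l).mulVec (xstar.2 l) (q.1.1, q.2) = _
          rw [hA1, hr]
          show c l (q.1.1, q.2) - (D l).mulVec (xstar.2 l) (q.1.1, q.2) =
            - ((D l).mulVec (xstar.2 l) (q.1.1, q.2) - c l (q.1.1, q.2))
          ring
        have hcard : Λs.card = m l - K l := (Finset.mem_filter.1 hΛs).2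
        have hmem : sigmaMin (blockSub (D l) Λs) ∈ {s : ℝ | ∃ Λ : Finset (Fin (m l)),
            Λ.card = m l - K l ∧ blockSub (D l) Λ ≠ 0 ∧ s = sigmaMin (blockSub (D l) Λ)} :=
          ⟨Λs, hcard, hbz, rfl⟩
        have hbdd : BddBelow {s : ℝ | ∃ Λ : Finset (Fin (m l)),
            Λ.card = m l - K l ∧ blockSub (D l) Λ ≠ 0 ∧ s = sigmaMin (blockSub (D l) Λ)} := by
          refine ⟨0, ?_⟩
          rintro s ⟨Λ, _, hne, rfl⟩
          exact (sigmaMin_key _ hne 0).1.le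
        have hKle : sigmaK (K l) (D l) ≤ sigmaMin (blockSub (D l) Λs) := by
          rw [hσK]
          exact csInf_le hbdd hmem
        have hKpos : 0 < sigmaK (K l) (D l) := by
          have hfin : {s : ℝ | ∃ Λ : Finset (Fin (m l)),
              Λ.card = m l - K l ∧ blockSub (D l) Λ ≠ 0 ∧
              s = sigmaMin (blockSub (D l) Λ)}.Finite := by
            apply Set.Finite.subset
              (Set.finite_range (fun Λ : Finset (Fin (m l)) => sigmaMin (blockSub (D l) Λ)))
            rintro s ⟨Λ, _, _, rfl⟩
            exact ⟨Λ, rfl⟩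
          have hne' : {s : ℝ | ∃ Λ : Finset (Fin (m l)),
              Λ.card = m l - K l ∧ blockSub (D l) Λ ≠ 0 ∧
              s = sigmaMin (blockSub (D l) Λ)}.Nonempty := ⟨_, hmem⟩
          obtain ⟨Λ', _, hbz', heq'⟩ := hne'.csInf_mem hfin
          rw [hσK, heq']
          exact (sigmaMin_key _ hbz' 0).1
        refine ⟨d, ?_, hKpos, ?_⟩
        · intro i hi j
          have := congrFun hd1 (⟨i, hi⟩, j)
          rw [hbm, hAx] at this
          exact this
        · have hle1 : sigmaK (K l) (D l) * en d ≤ sigmaMin (blockSub (D l) Λs) * en d :=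
            mul_le_mul_of_nonneg_right hKle (en_nonneg d)
          refine le_trans hle1 (le_trans hd2 ?_)
          rw [hAx, hT0eq]
          have h1 : ∑ q : {i // i ∈ Λs} × Fin (p l), (- r (q.1.1, q.2)) ^ 2 =
              ∑ i ∈ Λs, ∑ j, r (i, j) ^ 2 := by
            rw [Fintype.sum_prod_type]
            rw [← Finset.sum_coe_sort Λs (fun i => ∑ j, r (i, j) ^ 2)]
            apply Finset.sum_congr rfl
            intro i _
            apply Finset.sum_congr rfl
            intro j _
            ring
          calc en (fun q : {i // i ∈ Λs} × Fin (p l) => - r (q.1.1, q.2))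
              = Real.sqrt (∑ i ∈ Λs, ∑ j, r (i, j) ^ 2) := by rw [en, h1]
            _ ≤ ∑ i ∈ Λs, Real.sqrt (∑ j, r (i, j) ^ 2) :=
              sqrt_sum_le _ _ (fun i _ => by positivity)
            _ = ∑ i ∈ Λs, en (fun j => r (i, j)) := rfl
  rcases hkey with h0 | ⟨dl, hdl1, hσKpos, hdl2⟩
  · exact h0
  -- derivative machinery
  set u : Fin (m l) × Fin (p l) → ℝ := fun ip => (D l).mulVec dl ip with hu
  choose Lq hLq hLqval using fun i : Fin (m l) =>
    en_quot_tendsto (fun j => r (i, j)) (fun j => u (i, j))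
  set g : Finset (Fin (m l)) → ℝ → ℝ :=
    fun Λ ς => ∑ i ∈ Λ, en (fun j => r (i, j) + ς * u (i, j)) with hg
  have hg0 : ∀ Λ : Finset (Fin (m l)), g Λ 0 = ∑ i ∈ Λ, en (fun j => r (i, j)) := by
    intro Λ
    apply Finset.sum_congr rfl
    intro i _
    congr 1
    funext j
    ring
  have hgq : ∀ Λ ∈ 𝒮, Tendsto (fun ς => (g Λ ς - g Λ 0) / ς)
      (nhdsWithin 0 (Set.Ioi 0)) (nhds (∑ i ∈ Λ, Lq i)) := by
    intro Λ _
    have h1 := tendsto_finset_sum Λ (fun i (_ : i ∈ Λ) => hLq i)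
    apply h1.congr
    intro ς
    rw [hg0 Λ, hg, ← Finset.sum_div, ← Finset.sum_sub_distrib]
  obtain ⟨Lφ, hLφ, hLφle⟩ := tendsto_inf'_quot 𝒮 hSne g (fun Λ => ∑ i ∈ Λ, Lq i) hgq
  have hinfg0 : 𝒮.inf' hSne (fun b => g b 0) =
      𝒮.inf' hSne (fun Λ => ∑ i ∈ Λ, en (fun j => r (i, j))) :=
    Finset.inf'_congr hSne rfl fun Λ _ => hg0 Λ
  have hact : g Λs 0 = 𝒮.inf' hSne (fun b => g b 0) := by
    rw [hg0 Λs, hinfg0, hΛsval]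
  have hLqs : ∀ i ∈ Λs, Lq i = - en (fun j => r (i, j)) := by
    intro i hi
    apply hLqval i
    intro j
    show u (i, j) = - r (i, j)
    rw [hu]
    exact hdl1 i hi j
  have hLφT : Lφ ≤ - T0 := by
    calc Lφ ≤ ∑ i ∈ Λs, Lq i := hLφle Λs hΛs hact
      _ = - T0 := by
        rw [Finset.sum_congr rfl hLqs, Finset.sum_neg_distrib, hT0eq]
  set dstar : (Fin n0 → ℝ) × (∀ l', Fin (n l') → ℝ) :=
    ((0 : Fin n0 → ℝ), Function.update (0 : ∀ l', Fin (n l') → ℝ) l dl) with hdstar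
  have hFq : ∀ ς : ℝ, (F (xstar + ς • dstar) - F xstar) / ς =
      (f (xstar + ς • dstar) - f xstar) / ς +
      γ l * ((𝒮.inf' hSne (fun a => g a ς) - 𝒮.inf' hSne (fun a => g a 0)) / ς) := by
    intro ς
    have hterm : ∀ l', l' ≠ l →
        trimmedL1 (K l') (fun ip => (D l').mulVec ((xstar + ς • dstar).2 l') ip - c l' ip)
        = trimmedL1 (K l') (fun ip => (D l').mulVec (xstar.2 l') ip - c l' ip) := by
      intro l' hl'
      have hx : (xstar + ς • dstar).2 l' = xstar.2 l' := by
        show xstar.2 l' + ς • (dstar.2 l') = xstar.2 l'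
        rw [hdstar]
        show xstar.2 l' + ς • (Function.update (0 : ∀ l', Fin (n l') → ℝ) l dl l') = xstar.2 l'
        rw [Function.update_of_ne hl']
        simp
      rw [hx]
    have htl : trimmedL1 (K l) (fun ip => (D l).mulVec ((xstar + ς • dstar).2 l) ip - c l ip)
        = 𝒮.inf' hSne (fun a => g a ς) := by
      have hxl : (xstar + ς • dstar).2 l = xstar.2 l + ς • dl := by
        show xstar.2 l + ς • (dstar.2 l) = _
        rw [hdstar]
        show xstar.2 l + ς • (Function.update (0 : ∀ l', Fin (n l') → ℝ) l dl l) = _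
        rw [Function.update_self]
      rw [hxl, trimmedL1_eq (K l) hSne]
      refine Finset.inf'_congr hSne rfl fun Λ _ => ?_
      apply Finset.sum_congr rfl
      intro i _
      congr 1
      funext j
      rw [Matrix.mulVec_add, Matrix.mulVec_smul]
      show (D l).mulVec (xstar.2 l) (i, j) + ς * (D l).mulVec dl (i, j) - c l (i, j) =
        r (i, j) + ς * u (i, j)
      rw [hr, hu]
      ring
    have hφ0x : trimmedL1 (K l) r = 𝒮.inf' hSne (fun a => g a 0) := by
      rw [trimmedL1_eq (K l) hSne r, hinfg0]
    have hsum : (∑ l', γ l' *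
        trimmedL1 (K l') (fun ip => (D l').mulVec ((xstar + ς • dstar).2 l') ip - c l' ip))
        - (∑ l', γ l' *
        trimmedL1 (K l') (fun ip => (D l').mulVec (xstar.2 l') ip - c l' ip))
        = γ l * (𝒮.inf' hSne (fun a => g a ς) - 𝒮.inf' hSne (fun a => g a 0)) := by
      rw [← Finset.sum_sub_distrib, Finset.sum_eq_single l]
      · rw [htl]
        have : trimmedL1 (K l) (fun ip => (D l).mulVec (xstar.2 l) ip - c l ip) =
            𝒮.inf' hSne (fun a => g a 0) := hφ0x
        rw [this]
        ring
      · intro l' _ hl'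
        rw [hterm l' hl']
        ring
      · intro h
        exact absurd (Finset.mem_univ l) h
    rw [hF (xstar + ς • dstar), hF xstar]
    rw [show f (xstar + ς • dstar) + (∑ l', γ l' *
        trimmedL1 (K l') (fun ip => (D l').mulVec ((xstar + ς • dstar).2 l') ip - c l' ip))
        - (f xstar + ∑ l', γ l' *
        trimmedL1 (K l') (fun ip => (D l').mulVec (xstar.2 l') ip - c l' ip))
        = (f (xstar + ς • dstar) - f xstar) + ((∑ l', γ l' *
        trimmedL1 (K l') (fun ip => (D l').mulVec ((xstar + ς • dstar).2 l') ip - c l' ip))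
        - (∑ l', γ l' *
        trimmedL1 (K l') (fun ip => (D l').mulVec (xstar.2 l') ip - c l' ip))) from by ring]
    rw [hsum, add_div, mul_div_assoc]
  have hdd : HasDDerivAt F xstar dstar (df xstar dstar + γ l * Lφ) := by
    unfold HasDDerivAt
    have h1 := (hdf xstar dstar).add (hLφ.const_mul (γ l))
    exact h1.congr fun ς => (hFq ς).symm
  have hstat1 := hstat dstar _ hdd
  have hγT : γ l * T0 ≤ df xstar dstar := by
    have h2 : γ l * Lφ ≤ γ l * (- T0) := mul_le_mul_of_nonneg_left hLφT (hγ l).le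
    linarith
  by_cases hdl0 : dl = 0
  · rw [hT0eq]
    apply Finset.sum_eq_zero
    intro i hi
    have hz : ∀ j, r (i, j) = 0 := by
      intro j
      have := hdl1 i hi j
      rw [hdl0, Matrix.mulVec_zero] at this
      have h0 : (0 : ℝ) = - r (i, j) := this
      linarith
    simp [en, hz]
  · have hν : 0 < en dl := en_pos hdl0
    have hunit1 : Real.sqrt (∑ j, ((en dl)⁻¹ * dl j) ^ 2) = 1 := by
      have h1 := en_smul (en dl)⁻¹ (inv_nonneg.2 hν.le) dl
      show en (fun j => (en dl)⁻¹ * dl j) = 1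
      rw [h1]
      field_simp
    have hA2u := hA2 (fun j => (en dl)⁻¹ * dl j) hunit1
    set du : (Fin n0 → ℝ) × (∀ l', Fin (n l') → ℝ) :=
      ((0 : Fin n0 → ℝ), Function.update (0 : ∀ l', Fin (n l') → ℝ) l
        (fun j => (en dl)⁻¹ * dl j)) with hdu
    have hsmul : dstar = en dl • du := by
      rw [hdstar, hdu]
      refine Prod.ext ?_ ?_
      · show (0 : Fin n0 → ℝ) = en dl • 0
        simp
      · show Function.update (0 : ∀ l', Fin (n l') → ℝ) l dl =
          en dl • Function.update (0 : ∀ l', Fin (n l') → ℝ) l (fun j => (en dl)⁻¹ * dl j)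
        funext l'
        by_cases hl' : l' = l
        · subst hl'
          show Function.update (0 : ∀ l'', Fin (n l'') → ℝ) l' dl l' =
            en dl • (Function.update (0 : ∀ l'', Fin (n l'') → ℝ) l'
              (fun j => (en dl)⁻¹ * dl j) l')
          rw [Function.update_self, Function.update_self]
          funext j
          show dl j = en dl * ((en dl)⁻¹ * dl j)
          field_simp
        · show Function.update (0 : ∀ l'', Fin (n l'') → ℝ) l dl l' =
            en dl • (Function.update (0 : ∀ l'', Fin (n l'') → ℝ) l
              (fun j => (en dl)⁻¹ * dl j) l')
          rw [Function.update_of_ne hl', Function.update_of_ne hl']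
          simp
    have hhom := (hdf xstar du).smul_dir hν
    have huniq : df xstar dstar = en dl * df xstar du := by
      rw [hsmul]
      exact tendsto_nhds_unique (hdf xstar (en dl • du)) hhom
    have hdfb : df xstar dstar ≤ en dl * Γ := by
      rw [huniq]
      exact mul_le_mul_of_nonneg_left hA2u hν.le
    have hΓlt : Γ < γ l * sigmaK (K l) (D l) := by
      rw [gt_iff_lt, div_lt_iff₀ hσKpos] at hγl
      linarith
    by_contra hT0ne
    have hT0pos : 0 < T0 := lt_of_le_of_ne hT0nn (Ne.symm hT0ne)
    nlinarith [mul_lt_mul_of_pos_left hΓlt hν, mul_le_mul_of_nonneg_left hdl2 (hγ l).le,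
      hγT, hdfb]
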